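/- Consider a sequence of designs indexed by N with |y_i(d_k)|/π_i(d_k) ≤ c uniformly and Σ_i Σ_j g_{ij} = o(N²), where g_{ij} indicates dependence between exposure indicators of units i and j. Then the Horvitz-Thompson mean estimator μ̂_N(d_k) satisfies μ̂_N(d_k) − μ_N(d_k) → 0 in probability (in L², via Var(μ̂_N(d_k)) → 0 and unbiasedness). -/
import Mathlib


open Finset

noncomputable def expect {Ωs : Type*} [Fintype Ωs] (p : Ωs → ℝ) (X : Ωs → ℝ) : ℝ :=
  ∑ ω, p ω * X ω

noncomputable def Var' {Ωs : Type*} [Fintype Ωs] (p : Ωs → ℝ) (X : Ωs → ℝ) : ℝ :=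
  expect p (fun ω => (X ω - expect p X) ^ 2)

noncomputable def Cov' {Ωs : Type*} [Fintype Ωs] (p : Ωs → ℝ) (X Y : Ωs → ℝ) : ℝ :=
  expect p (fun ω => (X ω - expect p X) * (Y ω - expect p Y))

section helpers
variable {Ω : Type*} [Fintype Ω] (p : Ω → ℝ)

lemma expect_sum' {ι : Type*} (s : Finset ι) (X : ι → Ω → ℝ) :
    expect p (fun ω => ∑ i ∈ s, X i ω) = ∑ i ∈ s, expect p (X i) := by
  unfold _root_.expect
  rw [Finset.sum_comm]
  exact Finset.sum_congr rfl fun ω _ => Finset.mul_sum _ _ _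

lemma expect_smul' (a : ℝ) (X : Ω → ℝ) : expect p (fun ω => a * X ω) = a * expect p X := by
  unfold _root_.expect
  rw [Finset.mul_sum]
  exact Finset.sum_congr rfl fun ω _ => by ring

lemma Var'_sum' {ι : Type*} (s : Finset ι) (X : ι → Ω → ℝ) :
    Var' p (fun ω => ∑ i ∈ s, X i ω) = ∑ i ∈ s, ∑ j ∈ s, Cov' p (X i) (X j) := by
  unfold Var' Cov'
  rw [expect_sum']
  have h1 : (fun ω => (∑ i ∈ s, X i ω - ∑ i ∈ s, expect p (X i)) ^ 2)
      = fun ω => ∑ i ∈ s, ∑ j ∈ s,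
          (X i ω - expect p (X i)) * (X j ω - expect p (X j)) := by
    funext ω
    rw [← Finset.sum_sub_distrib, sq, Finset.sum_mul_sum]
  rw [h1, expect_sum']
  exact Finset.sum_congr rfl fun i _ => expect_sum' _ _ _

lemma Cov'_smul' (a b : ℝ) (X Y : Ω → ℝ) :
    Cov' p (fun ω => a * X ω) (fun ω => b * Y ω) = a * b * Cov' p X Y := by
  unfold Cov'
  rw [expect_smul', expect_smul']
  rw [show (fun ω => (a * X ω - a * expect p X) * (b * Y ω - b * expect p Y))
      = fun ω => (a * b) * ((X ω - expect p X) * (Y ω - expect p Y)) from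
    funext fun ω => by ring]
  exact expect_smul' _ _ _

lemma expect_mem01 (h0 : ∀ ω, 0 ≤ p ω) (h1 : ∑ ω, p ω = 1)
    (X : Ω → ℝ) (hX0 : ∀ ω, 0 ≤ X ω) (hX1 : ∀ ω, X ω ≤ 1) :
    0 ≤ expect p X ∧ expect p X ≤ 1 := by
  constructor
  · exact Finset.sum_nonneg fun ω _ => mul_nonneg (h0 ω) (hX0 ω)
  · rw [← h1]
    exact Finset.sum_le_sum fun ω _ => mul_le_of_le_one_right (h0 ω) (hX1 ω)

lemma abs_Cov'_le_one (h0 : ∀ ω, 0 ≤ p ω) (h1 : ∑ ω, p ω = 1)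
    (X Y : Ω → ℝ) (hX0 : ∀ ω, 0 ≤ X ω) (hX1 : ∀ ω, X ω ≤ 1)
    (hY0 : ∀ ω, 0 ≤ Y ω) (hY1 : ∀ ω, Y ω ≤ 1) :
    |Cov' p X Y| ≤ 1 := by
  obtain ⟨hmX0, hmX1⟩ := expect_mem01 p h0 h1 X hX0 hX1
  obtain ⟨hmY0, hmY1⟩ := expect_mem01 p h0 h1 Y hY0 hY1
  unfold Cov' _root_.expect
  calc |∑ ω, p ω * ((X ω - expect p X) * (Y ω - expect p Y))|
      ≤ ∑ ω, |p ω * ((X ω - expect p X) * (Y ω - expect p Y))| :=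
        Finset.abs_sum_le_sum_abs _ _
    _ ≤ ∑ ω, p ω := by
        refine Finset.sum_le_sum fun ω _ => ?_
        rw [abs_mul, abs_mul, abs_of_nonneg (h0 ω)]
        have hx : |X ω - expect p X| ≤ 1 := by
          rw [abs_sub_le_iff]; constructor <;> [linarith [hX1 ω]; linarith [hX0 ω]]
        have hy : |Y ω - expect p Y| ≤ 1 := by
          rw [abs_sub_le_iff]; constructor <;> [linarith [hY1 ω]; linarith [hY0 ω]]
        calc p ω * (|X ω - expect p X| * |Y ω - expect p Y|)
            ≤ p ω * (1 * 1) := by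
              exact mul_le_mul_of_nonneg_left
                (mul_le_mul hx hy (abs_nonneg _) zero_le_one) (h0 ω)
          _ = p ω := by ring
    _ = 1 := h1

lemma Var'_nonneg' (h0 : ∀ ω, 0 ≤ p ω) (X : Ω → ℝ) : 0 ≤ Var' p X :=
  Finset.sum_nonneg fun ω _ => mul_nonneg (h0 ω) (sq_nonneg _)

open scoped Classical in
lemma cheb (h0 : ∀ ω, 0 ≤ p ω) (X : Ω → ℝ) {ε : ℝ} (hε : 0 < ε) :
    ∑ ω ∈ Finset.univ.filter (fun ω => ε ≤ |X ω - expect p X|), p ω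
      ≤ Var' p X / ε ^ 2 := by
  rw [le_div_iff₀ (by positivity : (0:ℝ) < ε ^ 2), Finset.sum_mul]
  calc ∑ ω ∈ Finset.univ.filter (fun ω => ε ≤ |X ω - expect p X|), p ω * ε ^ 2
      ≤ ∑ ω ∈ Finset.univ.filter (fun ω => ε ≤ |X ω - expect p X|),
          p ω * (X ω - expect p X) ^ 2 := by
        refine Finset.sum_le_sum fun ω hω => ?_
        have := (Finset.mem_filter.mp hω).2
        refine mul_le_mul_of_nonneg_left ?_ (h0 ω)
        calc ε ^ 2 ≤ |X ω - expect p X| ^ 2 := by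
              exact pow_le_pow_left₀ hε.le this 2
          _ = (X ω - expect p X) ^ 2 := sq_abs _
    _ ≤ ∑ ω, p ω * (X ω - expect p X) ^ 2 :=
        Finset.sum_le_sum_of_subset_of_nonneg (Finset.filter_subset _ _)
          (fun ω _ _ => mul_nonneg (h0 ω) (sq_nonneg _))
    _ = Var' p X := rfl

end helpers

open scoped Classical in
/-- Consistency of the HT mean estimator: under uniform boundedness and `o(N²)` dependence,
the estimator is unbiased and converges in probability to the population mean. -/
theorem stmt11 {Δ : Type*} [DecidableEq Δ]
    (Ωs : ℕ → Type) [∀ n, Fintype (Ωs n)]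
    (p : ∀ n, Ωs n → ℝ)
    (hp0 : ∀ n ω, 0 ≤ p n ω) (hp1 : ∀ n, ∑ ω, p n ω = 1)
    (D : ∀ n, Fin n → Ωs n → Δ) (y : ∀ n, Fin n → Δ → ℝ)
    (π : ∀ n, Fin n → Δ → ℝ)
    (hπ : ∀ n i d, π n i d = ∑ ω, p n ω * (if D n i ω = d then (1:ℝ) else 0))
    (hπ01 : ∀ n i d, 0 < π n i d ∧ π n i d < 1)
    (dk : Δ)
    (c : ℝ) (hc : ∀ n i, |y n i dk| / π n i dk ≤ c)
    (g : ∀ n, Fin n → Fin n → ℝ)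
    (hg : ∀ n i j, g n i j =
      if Cov' (p n) (fun ω => if D n i ω = dk then (1:ℝ) else 0)
              (fun ω => if D n j ω = dk then (1:ℝ) else 0) = 0 then 0 else 1)
    (ho : (fun n => ∑ i, ∑ j, g n i j) =o[Filter.atTop] (fun n => (n : ℝ) ^ 2))
    (μhat : ∀ n, Ωs n → ℝ)
    (hμhat : ∀ n ω, μhat n ω =
      (1 / (n : ℝ)) * ∑ i, (if D n i ω = dk then (1:ℝ) else 0) * y n i dk / π n i dk)
    (μ : ℕ → ℝ) (hμ : ∀ n, μ n = (1 / (n : ℝ)) * ∑ i, y n i dk) :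
    (∀ n, 0 < n → expect (p n) (μhat n) = μ n)
    ∧ Filter.Tendsto (fun n => Var' (p n) (μhat n)) Filter.atTop (nhds 0)
    ∧ ∀ ε : ℝ, 0 < ε →
        Filter.Tendsto
          (fun n => ∑ ω ∈ Finset.univ.filter (fun ω => ε ≤ |μhat n ω - μ n|), p n ω)
          Filter.atTop (nhds 0) := by
  have hc0 : 0 ≤ c :=
    le_trans (div_nonneg (abs_nonneg _) (hπ01 1 ⟨0, one_pos⟩ dk).1.le) (hc 1 ⟨0, one_pos⟩)
  have hIexp : ∀ n (i : Fin n),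
      expect (p n) (fun ω => if D n i ω = dk then (1:ℝ) else 0) = π n i dk := by
    intro n i; rw [hπ]; rfl
  have hrew : ∀ n, μhat n = fun ω => ∑ i,
      ((1/(n:ℝ)) * (y n i dk / π n i dk)) * (if D n i ω = dk then (1:ℝ) else 0) := by
    intro n; funext ω; rw [hμhat, Finset.mul_sum]
    exact Finset.sum_congr rfl fun i _ => by ring
  have hE : ∀ n, expect (p n) (μhat n) = μ n := by
    intro n
    rw [hrew, expect_sum', hμ, Finset.mul_sum]
    refine Finset.sum_congr rfl fun i _ => ?_
    rw [expect_smul', hIexp, mul_assoc, div_mul_cancel₀ _ (hπ01 n i dk).1.ne']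
  have key : ∀ n : ℕ, 1 ≤ n →
      Var' (p n) (μhat n) ≤ c^2 * ((∑ i, ∑ j, g n i j) / (n:ℝ)^2) := by
    intro n hn
    have hnpos : (0:ℝ) < n := by exact_mod_cast hn
    rw [hrew, Var'_sum']
    have hterm : ∀ i j : Fin n,
        Cov' (p n)
          (fun ω => (1/(n:ℝ) * (y n i dk / π n i dk)) * (if D n i ω = dk then (1:ℝ) else 0))
          (fun ω => (1/(n:ℝ) * (y n j dk / π n j dk)) * (if D n j ω = dk then (1:ℝ) else 0))
          ≤ (c^2 / (n:ℝ)^2) * g n i j := by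
      intro i j
      rw [Cov'_smul']
      by_cases h : Cov' (p n) (fun ω => if D n i ω = dk then (1:ℝ) else 0)
          (fun ω => if D n j ω = dk then (1:ℝ) else 0) = 0
      · rw [h, mul_zero, hg, if_pos h, mul_zero]
      · rw [hg, if_neg h, mul_one]
        have hco : ∀ k : Fin n, |1/(n:ℝ) * (y n k dk / π n k dk)| ≤ 1/(n:ℝ) * c := by
          intro k
          rw [abs_mul, abs_of_pos (by positivity : (0:ℝ) < 1/(n:ℝ)), abs_div,
            abs_of_pos (hπ01 n k dk).1]
          exact mul_le_mul_of_nonneg_left (hc n k) (by positivity)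
        have hcov : |Cov' (p n) (fun ω => if D n i ω = dk then (1:ℝ) else 0)
            (fun ω => if D n j ω = dk then (1:ℝ) else 0)| ≤ 1 := by
          refine abs_Cov'_le_one (p n) (hp0 n) (hp1 n) _ _ ?_ ?_ ?_ ?_ <;>
            · intro ω; split <;> norm_num
        have hnn : (0:ℝ) ≤ 1/(n:ℝ) * c := mul_nonneg (by positivity) hc0
        calc 1/(n:ℝ) * (y n i dk / π n i dk) * (1/(n:ℝ) * (y n j dk / π n j dk)) *
              Cov' (p n) (fun ω => if D n i ω = dk then (1:ℝ) else 0)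
                (fun ω => if D n j ω = dk then (1:ℝ) else 0)
            ≤ |1/(n:ℝ) * (y n i dk / π n i dk) * (1/(n:ℝ) * (y n j dk / π n j dk)) *
              Cov' (p n) (fun ω => if D n i ω = dk then (1:ℝ) else 0)
                (fun ω => if D n j ω = dk then (1:ℝ) else 0)| := le_abs_self _
          _ = |1/(n:ℝ) * (y n i dk / π n i dk)| * |1/(n:ℝ) * (y n j dk / π n j dk)| *
              |Cov' (p n) (fun ω => if D n i ω = dk then (1:ℝ) else 0)
                (fun ω => if D n j ω = dk then (1:ℝ) else 0)| := by
              rw [abs_mul, abs_mul]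
          _ ≤ (1/(n:ℝ) * c) * (1/(n:ℝ) * c) * 1 := by
              exact mul_le_mul (mul_le_mul (hco i) (hco j) (abs_nonneg _) hnn) hcov
                (abs_nonneg _) (mul_nonneg hnn hnn)
          _ = c^2 / (n:ℝ)^2 := by field_simp
    calc (∑ i, ∑ j, Cov' (p n)
          (fun ω => (1/(n:ℝ) * (y n i dk / π n i dk)) * (if D n i ω = dk then (1:ℝ) else 0))
          (fun ω => (1/(n:ℝ) * (y n j dk / π n j dk)) * (if D n j ω = dk then (1:ℝ) else 0)))
        ≤ ∑ i, ∑ j, (c^2 / (n:ℝ)^2) * g n i j :=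
          Finset.sum_le_sum fun i _ => Finset.sum_le_sum fun j _ => hterm i j
      _ = c^2 * ((∑ i, ∑ j, g n i j) / (n:ℝ)^2) := by
          simp only [← Finset.mul_sum]; ring
  have hratio : Filter.Tendsto (fun n => (∑ i, ∑ j, g n i j) / (n:ℝ)^2)
      Filter.atTop (nhds 0) := by
    refine (Asymptotics.isLittleO_iff_tendsto ?_).mp ho
    intro n hn
    have hn0 : n = 0 := by
      have : (n:ℝ) = 0 := by
        have := pow_eq_zero_iff (n := 2) (by norm_num) |>.mp hn
        exact this
      exact_mod_cast this
    subst hn0; simp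
  have h2 : Filter.Tendsto (fun n => c^2 * ((∑ i, ∑ j, g n i j) / (n:ℝ)^2))
      Filter.atTop (nhds 0) := by
    simpa using hratio.const_mul (c^2)
  have hVtend : Filter.Tendsto (fun n => Var' (p n) (μhat n)) Filter.atTop (nhds 0) :=
    squeeze_zero' (Filter.Eventually.of_forall fun n => Var'_nonneg' (p n) (hp0 n) _)
      (Filter.eventually_atTop.mpr ⟨1, key⟩) h2
  refine ⟨fun n _ => hE n, hVtend, fun ε hε => ?_⟩
  have hb : ∀ n : ℕ, 1 ≤ n →
      ∑ ω ∈ Finset.univ.filter (fun ω => ε ≤ |μhat n ω - μ n|), p n ω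
        ≤ Var' (p n) (μhat n) / ε ^ 2 := by
    intro n hn
    have h := cheb (p n) (hp0 n) (μhat n) hε
    rwa [hE n] at h
  have hd : Filter.Tendsto (fun n => Var' (p n) (μhat n) / ε ^ 2) Filter.atTop (nhds 0) := by
    simpa using hVtend.div_const (ε ^ 2)
  exact squeeze_zero'
    (Filter.Eventually.of_forall fun n => Finset.sum_nonneg fun ω _ => hp0 n ω)
    (Filter.eventually_atTop.mpr ⟨1, hb⟩) hd
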